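/- Let H be a weak Hopf algebra and C a right partial H-module coalgebra via ↼. Suppose there exists an element e ∈ H such that Δ(e) = e⊗e and c↼(he) = c↼h for all c ∈ C and h ∈ H. Then C admits a globalization. Explicitly, the coalgebra D = C⊗eH (with Δ(c⊗eh) = (c₁⊗eh₁)⊗(c₂⊗eh₂), well defined since eH is a subcoalgebra because e is grouplike), equipped with the right H-action (c⊗eh)◂k = c⊗ehk, together with θ : C → D, θ(c) = c⊗e, and π : D → D, π(c⊗eh) = (c↼eh)⊗e, is a globalization of C. -/

import Mathlib

open TensorProduct Coalgebra

noncomputable section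

variable (k : Type*) [Field k]

section WeakHopfDefs

variable (H : Type*) [Ring H] [Algebra k H] [Coalgebra k H]

/-- The target map `ε_t(h) = ε(1₁ h) 1₂` of a weak bialgebra. -/
def wεt (h : H) : H :=
  (TensorProduct.lid k H)
    ((TensorProduct.map (counit (R := k) ∘ₗ LinearMap.mulRight k h) (LinearMap.id))
      (comul (R := k) (1 : H)))

/-- The source map `ε_s(h) = 1₁ ε(h 1₂)` of a weak bialgebra. -/
def wεs (h : H) : H :=
  (TensorProduct.rid k H)
    ((TensorProduct.map (LinearMap.id) (counit (R := k) ∘ₗ LinearMap.mulLeft k h))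
      (comul (R := k) (1 : H)))

/-- A weak Hopf algebra structure on an algebra `H` which is also a coalgebra:
the weak bialgebra axioms together with an antipode `S`. -/
structure WeakHopf : Type _ where
  /-- Δ is multiplicative -/
  comul_mul : ∀ h g : H, comul (R := k) (h * g) = comul (R := k) h * comul (R := k) g
  /-- ε(hgl) = Σ ε(h g₁) ε(g₂ l) -/
  counit_weak_mul : ∀ h g l : H, counit (R := k) (h * g * l)
      = LinearMap.mul' k k
          ((TensorProduct.map (counit (R := k) ∘ₗ LinearMap.mulLeft k h)
              (counit (R := k) ∘ₗ LinearMap.mulRight k l)) (comul (R := k) g))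
  /-- ε(hgl) = Σ ε(h g₂) ε(g₁ l) -/
  counit_weak_mul' : ∀ h g l : H, counit (R := k) (h * g * l)
      = LinearMap.mul' k k
          ((TensorProduct.map (counit (R := k) ∘ₗ LinearMap.mulLeft k h)
              (counit (R := k) ∘ₗ LinearMap.mulRight k l))
            ((TensorProduct.comm k H H) (comul (R := k) g)))
  /-- (1 ⊗ Δ(1))(Δ(1) ⊗ 1) = Δ²(1) -/
  comul_one_left :
      ((1 : H) ⊗ₜ[k] comul (R := k) (1 : H))
          * ((TensorProduct.assoc k H H H) (comul (R := k) (1 : H) ⊗ₜ[k] (1 : H)))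
        = (LinearMap.lTensor H (comul (R := k))) (comul (R := k) (1 : H))
  /-- (Δ(1) ⊗ 1)(1 ⊗ Δ(1)) = Δ²(1) -/
  comul_one_right :
      ((TensorProduct.assoc k H H H) (comul (R := k) (1 : H) ⊗ₜ[k] (1 : H)))
          * ((1 : H) ⊗ₜ[k] comul (R := k) (1 : H))
        = (LinearMap.lTensor H (comul (R := k))) (comul (R := k) (1 : H))
  /-- the antipode -/
  S : H →ₗ[k] H
  /-- Σ h₁ S(h₂) = ε_t(h) -/
  antipode_t : ∀ h : H,
      LinearMap.mul' k H ((LinearMap.lTensor H S) (comul (R := k) h)) = wεt k H h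
  /-- Σ S(h₁) h₂ = ε_s(h) -/
  antipode_s : ∀ h : H,
      LinearMap.mul' k H ((LinearMap.rTensor H S) (comul (R := k) h)) = wεs k H h
  /-- Σ S(h₁) h₂ S(h₃) = S(h) -/
  antipode_mid : ∀ h : H,
      LinearMap.mul' k H
        ((TensorProduct.map S (LinearMap.mul' k H ∘ₗ LinearMap.lTensor H S))
          ((LinearMap.lTensor H (comul (R := k))) (comul (R := k) h))) = S h

end WeakHopfDefs

section Actions

variable (H : Type*) [Ring H] [Algebra k H] [Coalgebra k H]
variable (C : Type*) [AddCommGroup C] [Module k C] [Coalgebra k C]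

/-- The Sweedler sum `Σ (h g₁ · c₁) ε(g₂ · c₂)` appearing in (PMC3). -/
def pmc3RHS (act : H →ₗ[k] C →ₗ[k] C) (h g : H) (c : C) : C :=
  (TensorProduct.rid k C)
    ((TensorProduct.map
        ((TensorProduct.lift act) ∘ₗ (LinearMap.rTensor C (LinearMap.mulLeft k h)))
        (counit (R := k) ∘ₗ (TensorProduct.lift act)))
      ((TensorProduct.tensorTensorTensorComm k H H C C)
        (comul (R := k) g ⊗ₜ[k] comul (R := k) c)))

/-- The Sweedler sum `Σ ε(g₁ · c₁) (h g₂ · c₂)` appearing in the symmetry condition. -/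
def pmc3symRHS (act : H →ₗ[k] C →ₗ[k] C) (h g : H) (c : C) : C :=
  (TensorProduct.lid k C)
    ((TensorProduct.map
        (counit (R := k) ∘ₗ (TensorProduct.lift act))
        ((TensorProduct.lift act) ∘ₗ (LinearMap.rTensor C (LinearMap.mulLeft k h))))
      ((TensorProduct.tensorTensorTensorComm k H H C C)
        (comul (R := k) g ⊗ₜ[k] comul (R := k) c)))

/-- (MC2)/(PMC2): `Δ(h·c) = (h₁·c₁) ⊗ (h₂·c₂)`. -/
def SweedlerComulCompat (act : H →ₗ[k] C →ₗ[k] C) : Prop :=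
  ∀ (h : H) (c : C),
    comul (R := k) (act h c)
      = (TensorProduct.map (TensorProduct.lift act) (TensorProduct.lift act))
          ((TensorProduct.tensorTensorTensorComm k H H C C)
            (comul (R := k) h ⊗ₜ[k] comul (R := k) c))

/-- `C` is a left partial `H`-module coalgebra via `act` (`act h c = h · c`). -/
structure IsPartialModuleCoalgebra (act : H →ₗ[k] C →ₗ[k] C) : Prop where
  pmc1 : ∀ c : C, act 1 c = c
  pmc2 : SweedlerComulCompat k H C act
  pmc3 : ∀ (h g : H) (c : C), act h (act g c) = pmc3RHS k H C act h g c

/-- `C` is a symmetric left partial `H`-module coalgebra via `act`. -/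
structure IsSymmetricPartialModuleCoalgebra (act : H →ₗ[k] C →ₗ[k] C)
    extends IsPartialModuleCoalgebra k H C act : Prop where
  pmc3sym : ∀ (h g : H) (c : C), act h (act g c) = pmc3symRHS k H C act h g c

/-- `C` is a left `H`-module coalgebra via `act`. -/
structure IsModuleCoalgebra (act : H →ₗ[k] C →ₗ[k] C) : Prop where
  mc1 : ∀ c : C, act 1 c = c
  mc2 : SweedlerComulCompat k H C act
  mc3 : ∀ (h g : H) (c : C), act h (act g c) = act (h * g) c
  mc4 : ∀ (h : H) (c : C), counit (R := k) (act h c) = counit (R := k) (act (wεs k H h) c)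

end Actions

end

noncomputable section RightDefs

variable (k : Type*) [Field k]
variable (H : Type*) [Ring H] [Algebra k H] [Coalgebra k H]
variable (C : Type*) [AddCommGroup C] [Module k C] [Coalgebra k C]

/-- `C` is a right partial `H`-module coalgebra via `ract` (`ract h c = c ↼ h`):
`c ↼ 1 = c`; `Δ(c ↼ h) = (c₁ ↼ h₁) ⊗ (c₂ ↼ h₂)`; and
`(c ↼ h) ↼ g = ε(c₁ ↼ h₁)(c₂ ↼ h₂ g)`. -/
structure IsRightPartialModuleCoalgebra (ract : H →ₗ[k] C →ₗ[k] C) : Prop where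
  rpmc1 : ∀ c : C, ract 1 c = c
  rpmc2 : SweedlerComulCompat k H C ract
  rpmc3 : ∀ (h g : H) (c : C), ract g (ract h c)
      = (TensorProduct.lid k C)
          ((TensorProduct.map (counit (R := k) ∘ₗ TensorProduct.lift ract)
              ((TensorProduct.lift ract) ∘ₗ (LinearMap.rTensor C (LinearMap.mulRight k g))))
            ((TensorProduct.tensorTensorTensorComm k H H C C)
              (comul (R := k) h ⊗ₜ[k] comul (R := k) c)))

/-- `D` is a right `H`-module coalgebra via `mact` (`mact h d = d ◂ h`):
`d ◂ 1 = d`; `Δ(d ◂ h) = (d₁ ◂ h₁) ⊗ (d₂ ◂ h₂)`; `(d ◂ h) ◂ g = d ◂ hg`. -/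
structure IsRightModuleCoalgebra (mact : H →ₗ[k] C →ₗ[k] C) : Prop where
  rmc1 : ∀ d : C, mact 1 d = d
  rmc2 : SweedlerComulCompat k H C mact
  rmc3 : ∀ (h g : H) (d : C), mact g (mact h d) = mact (h * g) d

end RightDefs

noncomputable section Globalization18

universe u

variable (k : Type u) [Field k]
variable (H : Type u) [Ring H] [Algebra k H] [Coalgebra k H]
variable (C : Type u) [AddCommGroup C] [Module k C] [Coalgebra k C]

/-- The right `H`-action on `C ⊗ H` by multiplication on the second factor:
`(c ⊗ h) ◂ g = c ⊗ hg`. -/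
def glMact : H →ₗ[k] (C ⊗[k] H) →ₗ[k] (C ⊗[k] H) :=
  (LinearMap.lTensorHom (R := k) (M := C) (N := H) (P := H)).comp ((LinearMap.mul k H).flip)

/-- `θ : C → C ⊗ H`, `θ(c) = c ⊗ e`. -/
def glTheta (e : H) : C →ₗ[k] C ⊗[k] H := (TensorProduct.mk k C H).flip e

/-- `π : C ⊗ H → C ⊗ H`, `π(c ⊗ h) = (c ↼ h) ⊗ e`. -/
def glPi (ract : H →ₗ[k] C →ₗ[k] C) (e : H) : C ⊗[k] H →ₗ[k] C ⊗[k] H :=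
  (glTheta k H C e) ∘ₗ (TensorProduct.lift ract) ∘ₗ (TensorProduct.comm k C H).toLinearMap

/-- The subspace `C ⊗ eH` of `C ⊗ H`. -/
def glE (e : H) : Submodule k (C ⊗[k] H) :=
  Submodule.span k {x : C ⊗[k] H | ∃ (c : C) (h : H), x = c ⊗ₜ[k] (e * h)}


section GlobAuxLemmas
set_option linter.unusedSectionVars false

@[simp] lemma glMact_tmul (h : H) (c : C) (m : H) :
    glMact k H C h (c ⊗ₜ[k] m) = c ⊗ₜ[k] (m * h) := rfl

@[simp] lemma glTheta_apply (e : H) (c : C) : glTheta k H C e c = c ⊗ₜ[k] e := rfl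

@[simp] lemma glPi_tmul (ract : H →ₗ[k] C →ₗ[k] C) (e : H) (c : C) (m : H) :
    glPi k H C ract e (c ⊗ₜ[k] m) = (ract m c) ⊗ₜ[k] e := rfl

lemma comul_tmulCH (c : C) (m : H) :
    comul (R := k) (c ⊗ₜ[k] m)
      = TensorProduct.tensorTensorTensorComm k C C H H
          (comul (R := k) c ⊗ₜ[k] comul (R := k) m) := by
  simp [TensorProduct.comul_def, TensorProduct.AlgebraTensorModule.tensorTensorTensorComm_eq]

lemma counit_tmulCH (c : C) (m : H) :
    counit (R := k) (c ⊗ₜ[k] m) = counit (R := k) c * counit (R := k) m := by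
  simp [TensorProduct.counit_def, mul_comm]

end GlobAuxLemmas

set_option maxHeartbeats 1000000 in
set_option synthInstance.maxHeartbeats 400000 in
/-- **Globalization Theorem.** Let `C` be a right partial `H`-module
coalgebra via `↼`, and suppose `e ∈ H` is a grouplike element (`Δ(e) = e ⊗ e`) with
`c ↼ he = c ↼ h` for all `c, h`. Then `C` has a globalization: the subcoalgebra
`D = C ⊗ eH` of `C ⊗ H` with action `(c ⊗ eh) ◂ g = c ⊗ ehg`, together with
`θ(c) = c ⊗ e` and `π(c ⊗ eh) = (c ↼ eh) ⊗ e`, is a globalization of `C`. -/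
theorem globalization_of_partial_module_coalgebra
    (wh : WeakHopf k H) (ract : H →ₗ[k] C →ₗ[k] C)
    (hC : IsRightPartialModuleCoalgebra k H C ract)
    (e : H) (he1 : comul (R := k) e = e ⊗ₜ[k] e)
    (he2 : ∀ (c : C) (h : H), ract (h * e) c = ract h c) :
    -- `C ⊗ H` is a right `H`-module coalgebra via `◂`
    IsRightModuleCoalgebra k H (C ⊗[k] H) (glMact k H C) ∧
    -- `C ⊗ eH` is stable under the action
    (∀ h : H, ∀ x ∈ glE k H C e, glMact k H C h x ∈ glE k H C e) ∧
    -- `C ⊗ eH` is a subcoalgebra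
    (∀ x ∈ glE k H C e,
        comul (R := k) x
          ∈ LinearMap.range
              (TensorProduct.map (glE k H C e).subtype (glE k H C e).subtype)) ∧
    -- `θ` is an injective coalgebra homomorphism into `C ⊗ eH`
    Function.Injective (glTheta k H C e) ∧
    (∀ c : C, comul (R := k) (glTheta k H C e c)
        = TensorProduct.map (glTheta k H C e) (glTheta k H C e) (comul (R := k) c)) ∧
    (∀ c : C, counit (R := k) (glTheta k H C e c) = counit (R := k) c) ∧
    (∀ c : C, glTheta k H C e c ∈ glE k H C e) ∧
    -- `π` is a projection of `C ⊗ eH` onto `θ(C)`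
    (∀ x ∈ glE k H C e, glPi k H C ract e x ∈ glE k H C e) ∧
    (∀ x ∈ glE k H C e, glPi k H C ract e (glPi k H C ract e x) = glPi k H C ract e x) ∧
    (∀ x ∈ glE k H C e, glPi k H C ract e x ∈ LinearMap.range (glTheta k H C e)) ∧
    (∀ c : C, ∃ x ∈ glE k H C e, glPi k H C ract e x = glTheta k H C e c) ∧
    -- `(π ⊗ π)(Δ(d ◂ h)) = Δ(π(d ◂ h))`
    (∀ h : H, ∀ x ∈ glE k H C e,
        TensorProduct.map (glPi k H C ract e) (glPi k H C ract e)
            (comul (R := k) (glMact k H C h x))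
          = comul (R := k) (glPi k H C ract e (glMact k H C h x))) ∧
    -- `π(π(d) ◂ h) = ε(π(d₁)) π(d₂ ◂ h)`
    (∀ h : H, ∀ x ∈ glE k H C e,
        glPi k H C ract e (glMact k H C h (glPi k H C ract e x))
          = (TensorProduct.lid k (C ⊗[k] H))
              ((TensorProduct.map (counit (R := k) ∘ₗ glPi k H C ract e)
                  ((glPi k H C ract e) ∘ₗ (glMact k H C h))) (comul (R := k) x))) ∧
    -- `θ(c ↼ h) = π(θ(c) ◂ h)`
    (∀ (h : H) (c : C),
        glTheta k H C e (ract h c) = glPi k H C ract e (glMact k H C h (glTheta k H C e c))) ∧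
    -- `D = θ(C) ◂ H`
    glE k H C e
      = Submodule.span k {x : C ⊗[k] H | ∃ (h : H) (c : C),
          x = glMact k H C h (glTheta k H C e c)} := by
  classical
  obtain ⟨rpmc1, rpmc2, rpmc3⟩ := hC
  -- `ract e c = c`
  have hee : ∀ c : C, ract e c = c := by
    intro c
    have h := he2 c 1
    rw [one_mul] at h
    rw [h, rpmc1]
  -- `ract (e * g) c = ract g c`
  have heL : ∀ (g : H) (c : C), ract (e * g) c = ract g c := by
    intro g c
    have key : ∀ u : C ⊗[k] C,
        (TensorProduct.lid k C)
          ((TensorProduct.map (counit (R := k) ∘ₗ TensorProduct.lift ract)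
              ((TensorProduct.lift ract) ∘ₗ (LinearMap.rTensor C (LinearMap.mulRight k g))))
            ((TensorProduct.tensorTensorTensorComm k H H C C) ((e ⊗ₜ[k] e) ⊗ₜ[k] u)))
        = ract (e * g) ((TensorProduct.lid k C) ((LinearMap.rTensor C (counit (R := k))) u)) := by
      intro u
      induction u using TensorProduct.induction_on with
      | zero => simp
      | tmul a b => simp [hee]
      | add x y hx hy => simp only [TensorProduct.tmul_add, map_add, hx, hy]
    have h3 := rpmc3 e g c
    rw [hee, he1] at h3
    have h4 := key (comul (R := k) c)
    rw [Coalgebra.rTensor_counit_comul] at h4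
    simp only [TensorProduct.lid_tmul, one_smul] at h4
    rw [h3, h4]
  -- `ε(e) • c = c`
  have heps : ∀ c : C, (counit (R := k) e) • c = c := by
    intro c
    by_cases h0 : e = 0
    · have hc0 : c = 0 := by
        rw [← hee c, h0, map_zero, LinearMap.zero_apply]
      rw [hc0, smul_zero]
    · have h1 : (counit (R := k) e) • e = e := by
        have h2 := Coalgebra.rTensor_counit_comul (R := k) e
        rw [he1] at h2
        simpa using congrArg (TensorProduct.lid k H) h2
      have h3 : counit (R := k) e = 1 := by
        have h2 : (counit (R := k) e - 1) • e = 0 := by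
          rw [sub_smul, one_smul, h1, sub_self]
        rcases smul_eq_zero.mp h2 with h | h
        · exact sub_eq_zero.mp h
        · exact absurd h h0
      rw [h3, one_smul]
  -- (1) `C ⊗ H` is a right module coalgebra
  have lemA : ∀ (u : C ⊗[k] C) (v w : H ⊗[k] H),
      TensorProduct.tensorTensorTensorComm k C C H H (u ⊗ₜ[k] (v * w))
        = TensorProduct.map (TensorProduct.lift (glMact k H C)) (TensorProduct.lift (glMact k H C))
            ((TensorProduct.tensorTensorTensorComm k H H (C ⊗[k] H) (C ⊗[k] H))
              (w ⊗ₜ[k] (TensorProduct.tensorTensorTensorComm k C C H H (u ⊗ₜ[k] v)))) := by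
    intro u v w
    induction u using TensorProduct.induction_on with
    | zero => simp
    | add x y hx hy =>
        simp only [TensorProduct.add_tmul, TensorProduct.tmul_add, map_add, hx, hy]
    | tmul c1 c2 =>
      induction v using TensorProduct.induction_on with
      | zero => simp
      | add x y hx hy =>
          simp only [TensorProduct.tmul_add, TensorProduct.add_tmul, add_mul, map_add, hx, hy]
      | tmul m1 m2 =>
        induction w using TensorProduct.induction_on with
        | zero => simp
        | add x y hx hy =>
            simp only [TensorProduct.tmul_add, TensorProduct.add_tmul, mul_add, map_add, hx, hy]
        | tmul h1 h2 =>
            simp [Algebra.TensorProduct.tmul_mul_tmul]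
  have rmc2 : SweedlerComulCompat k H (C ⊗[k] H) (glMact k H C) := by
    intro h x
    induction x using TensorProduct.induction_on with
    | zero => simp
    | add x y hx hy =>
        simp only [map_add, TensorProduct.tmul_add, hx, hy]
    | tmul c m =>
        rw [glMact_tmul, comul_tmulCH, comul_tmulCH, wh.comul_mul]
        exact lemA _ _ _
  have hpart1 : IsRightModuleCoalgebra k H (C ⊗[k] H) (glMact k H C) := by
    refine ⟨?_, rmc2, ?_⟩
    · intro d
      induction d using TensorProduct.induction_on with
      | zero => simp
      | tmul c m => simp
      | add x y hx hy => simp only [map_add, hx, hy]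
    · intro h g d
      induction d using TensorProduct.induction_on with
      | zero => simp
      | tmul c m => simp [mul_assoc]
      | add x y hx hy => simp only [map_add, hx, hy]
  -- (2) stability of `glE`
  have hstab : ∀ h : H, ∀ x ∈ glE k H C e, glMact k H C h x ∈ glE k H C e := by
    intro h x hx
    have hle : glE k H C e ≤ Submodule.comap (glMact k H C h) (glE k H C e) := by
      rw [glE, Submodule.span_le]
      rintro x ⟨c, g, rfl⟩
      exact Submodule.subset_span ⟨c, g * h, by rw [glMact_tmul, mul_assoc]⟩
    exact hle hx
  -- (3) `glE` is a subcoalgebra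
  have lemC : ∀ (u : C ⊗[k] C) (v : H ⊗[k] H),
      TensorProduct.tensorTensorTensorComm k C C H H (u ⊗ₜ[k] ((e ⊗ₜ[k] e) * v))
        ∈ LinearMap.range
            (TensorProduct.map (glE k H C e).subtype (glE k H C e).subtype) := by
    intro u v
    induction u using TensorProduct.induction_on with
    | zero => simpa using Submodule.zero_mem _
    | add x y hx hy =>
        rw [TensorProduct.add_tmul, map_add]
        exact Submodule.add_mem _ hx hy
    | tmul c1 c2 =>
      induction v using TensorProduct.induction_on with
      | zero => simpa using Submodule.zero_mem _
      | add x y hx hy =>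
          rw [mul_add, TensorProduct.tmul_add, map_add]
          exact Submodule.add_mem _ hx hy
      | tmul h1 h2 =>
          refine ⟨(⟨c1 ⊗ₜ[k] (e * h1), Submodule.subset_span ⟨c1, h1, rfl⟩⟩ :
              glE k H C e) ⊗ₜ[k] (⟨c2 ⊗ₜ[k] (e * h2), Submodule.subset_span ⟨c2, h2, rfl⟩⟩ :
              glE k H C e), ?_⟩
          simp [Algebra.TensorProduct.tmul_mul_tmul]
  have hsubco : ∀ x ∈ glE k H C e,
      comul (R := k) x
        ∈ LinearMap.range
            (TensorProduct.map (glE k H C e).subtype (glE k H C e).subtype) := by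
    intro x hx
    have hle : glE k H C e ≤ Submodule.comap
        (comul (R := k) (A := C ⊗[k] H))
        (LinearMap.range (TensorProduct.map (glE k H C e).subtype (glE k H C e).subtype)) := by
      conv_lhs => rw [glE]
      rw [Submodule.span_le]
      rintro x ⟨c, g, rfl⟩
      have : comul (R := k) (c ⊗ₜ[k] (e * g))
          = TensorProduct.tensorTensorTensorComm k C C H H
              (comul (R := k) c ⊗ₜ[k] ((e ⊗ₜ[k] e) * comul (R := k) g)) := by
        rw [comul_tmulCH, wh.comul_mul, he1]
      simp only [SetLike.mem_coe, Submodule.mem_comap]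
      rw [this]
      exact lemC _ _
    exact hle hx
  -- (4) `θ` injective
  have hinj : Function.Injective (glTheta k H C e) := by
    intro a b hab
    have h := congrArg
      ((TensorProduct.rid k C).toLinearMap ∘ₗ LinearMap.lTensor C (counit (R := k))) hab
    simpa [heps] using h
  -- (5) `θ` comultiplicative
  have lem5 : ∀ u : C ⊗[k] C,
      TensorProduct.tensorTensorTensorComm k C C H H (u ⊗ₜ[k] (e ⊗ₜ[k] e))
        = TensorProduct.map (glTheta k H C e) (glTheta k H C e) u := by
    intro u
    induction u using TensorProduct.induction_on with
    | zero => simp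
    | tmul a b => simp
    | add x y hx hy => simp only [TensorProduct.add_tmul, map_add, hx, hy]
  have hθΔ : ∀ c : C, comul (R := k) (glTheta k H C e c)
      = TensorProduct.map (glTheta k H C e) (glTheta k H C e) (comul (R := k) c) := by
    intro c
    rw [glTheta_apply, comul_tmulCH, he1]
    exact lem5 _
  -- (6) `θ` counital
  have hθε : ∀ c : C, counit (R := k) (glTheta k H C e c) = counit (R := k) c := by
    intro c
    rw [glTheta_apply, counit_tmulCH]
    have h := congrArg (counit (R := k)) (heps c)
    rw [map_smul, smul_eq_mul] at h
    rw [mul_comm]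
    exact h
  -- (7) `θ c ∈ glE`
  have hθE : ∀ c : C, glTheta k H C e c ∈ glE k H C e := by
    intro c
    exact Submodule.subset_span ⟨c, 1, by rw [glTheta_apply, mul_one]⟩
  -- (8) `π` preserves `glE`
  have hπE : ∀ x ∈ glE k H C e, glPi k H C ract e x ∈ glE k H C e := by
    intro x hx
    have hle : glE k H C e ≤ Submodule.comap (glPi k H C ract e) (glE k H C e) := by
      rw [glE, Submodule.span_le]
      rintro x ⟨c, g, rfl⟩
      exact Submodule.subset_span ⟨ract (e * g) c, 1, by rw [glPi_tmul, mul_one]⟩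
    exact hle hx
  -- (9) `π ∘ π = π`
  have hππ : ∀ x : C ⊗[k] H, glPi k H C ract e (glPi k H C ract e x) = glPi k H C ract e x := by
    intro x
    induction x using TensorProduct.induction_on with
    | zero => simp
    | tmul c m => simp [hee]
    | add x y hx hy => simp only [map_add, hx, hy]
  -- (10) `π x ∈ range θ`
  have hπθ : ∀ x : C ⊗[k] H, glPi k H C ract e x ∈ LinearMap.range (glTheta k H C e) := by
    intro x
    induction x using TensorProduct.induction_on with
    | zero => rw [map_zero]; exact Submodule.zero_mem _
    | tmul c m => exact ⟨ract m c, rfl⟩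
    | add x y hx hy =>
        rw [map_add]
        exact Submodule.add_mem _ hx hy
  -- (11) `π` onto `θ(C)`
  have hsurj : ∀ c : C, ∃ x ∈ glE k H C e, glPi k H C ract e x = glTheta k H C e c := by
    intro c
    exact ⟨glTheta k H C e c, hθE c, by simp [hee]⟩
  -- (12) `(π ⊗ π) ∘ Δ = Δ ∘ π`
  have lemD : ∀ (u : C ⊗[k] C) (v : H ⊗[k] H),
      TensorProduct.map (glPi k H C ract e) (glPi k H C ract e)
          (TensorProduct.tensorTensorTensorComm k C C H H (u ⊗ₜ[k] v))
        = TensorProduct.tensorTensorTensorComm k C C H H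
            ((TensorProduct.map (TensorProduct.lift ract) (TensorProduct.lift ract)
                (TensorProduct.tensorTensorTensorComm k H H C C (v ⊗ₜ[k] u)))
              ⊗ₜ[k] (e ⊗ₜ[k] e)) := by
    intro u v
    induction u using TensorProduct.induction_on with
    | zero => simp
    | add x y hx hy =>
        simp only [TensorProduct.add_tmul, TensorProduct.tmul_add, map_add, hx, hy]
    | tmul c1 c2 =>
      induction v using TensorProduct.induction_on with
      | zero => simp
      | add x y hx hy =>
          simp only [TensorProduct.add_tmul, TensorProduct.tmul_add, map_add, hx, hy]
      | tmul m1 m2 => simp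
  have hglob12 : ∀ y : C ⊗[k] H,
      TensorProduct.map (glPi k H C ract e) (glPi k H C ract e) (comul (R := k) y)
        = comul (R := k) (glPi k H C ract e y) := by
    intro y
    induction y using TensorProduct.induction_on with
    | zero => simp
    | add x y hx hy => simp only [map_add, hx, hy]
    | tmul c m =>
        rw [comul_tmulCH, glPi_tmul, comul_tmulCH, he1, rpmc2 m c]
        exact lemD _ _
  -- (13) `π(π(d) ◂ h) = ε(π(d₁)) π(d₂ ◂ h)`
  have lemE : ∀ (h : H) (u : C ⊗[k] C) (v : H ⊗[k] H),
      glTheta k H C e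
          ((TensorProduct.lid k C)
            ((TensorProduct.map (counit (R := k) ∘ₗ TensorProduct.lift ract)
                ((TensorProduct.lift ract) ∘ₗ (LinearMap.rTensor C (LinearMap.mulRight k h))))
              ((TensorProduct.tensorTensorTensorComm k H H C C) (v ⊗ₜ[k] u))))
        = (TensorProduct.lid k (C ⊗[k] H))
            ((TensorProduct.map (counit (R := k) ∘ₗ glPi k H C ract e)
                ((glPi k H C ract e) ∘ₗ (glMact k H C h)))
              (TensorProduct.tensorTensorTensorComm k C C H H (u ⊗ₜ[k] v))) := by
    intro h u v
    induction u using TensorProduct.induction_on with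
    | zero => simp
    | add x y hx hy =>
        simp only [TensorProduct.add_tmul, TensorProduct.tmul_add, map_add, hx, hy]
    | tmul c1 c2 =>
      induction v using TensorProduct.induction_on with
      | zero => simp
      | add x y hx hy =>
          simp only [TensorProduct.add_tmul, TensorProduct.tmul_add, map_add, hx, hy]
      | tmul m1 m2 =>
          simp only [TensorProduct.tensorTensorTensorComm_tmul, TensorProduct.map_tmul,
            LinearMap.coe_comp, Function.comp_apply, LinearMap.rTensor_tmul,
            LinearMap.mulRight_apply, TensorProduct.lift.tmul, TensorProduct.lid_tmul,
            map_smul, glTheta_apply, glMact_tmul, glPi_tmul, counit_tmulCH]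
          simp only [mul_smul, TensorProduct.smul_tmul', heps]
  have hglob13 : ∀ (h : H) (x : C ⊗[k] H),
      glPi k H C ract e (glMact k H C h (glPi k H C ract e x))
        = (TensorProduct.lid k (C ⊗[k] H))
            ((TensorProduct.map (counit (R := k) ∘ₗ glPi k H C ract e)
                ((glPi k H C ract e) ∘ₗ (glMact k H C h))) (comul (R := k) x)) := by
    intro h x
    induction x using TensorProduct.induction_on with
    | zero => simp
    | add x y hx hy => simp only [map_add, hx, hy]
    | tmul c m =>
        have l1 : glPi k H C ract e (glMact k H C h (glPi k H C ract e (c ⊗ₜ[k] m)))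
            = glTheta k H C e (ract h (ract m c)) := by
          simp only [glPi_tmul, glMact_tmul, glTheta_apply, heL]
        rw [l1, rpmc3 m h c, comul_tmulCH]
        exact lemE h _ _
  -- (14) `θ(c ↼ h) = π(θ(c) ◂ h)`
  have h14 : ∀ (h : H) (c : C),
      glTheta k H C e (ract h c) = glPi k H C ract e (glMact k H C h (glTheta k H C e c)) := by
    intro h c
    simp only [glTheta_apply, glMact_tmul, glPi_tmul, heL]
  -- (15) `D = θ(C) ◂ H`
  have h15 : glE k H C e
      = Submodule.span k {x : C ⊗[k] H | ∃ (h : H) (c : C),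
          x = glMact k H C h (glTheta k H C e c)} := by
    rw [glE]
    congr 1
    ext x
    constructor
    · rintro ⟨c, h, rfl⟩
      exact ⟨h, c, by rw [glTheta_apply, glMact_tmul]⟩
    · rintro ⟨h, c, rfl⟩
      exact ⟨c, h, by rw [glTheta_apply, glMact_tmul]⟩
  exact ⟨hpart1, hstab, hsubco, hinj, hθΔ, hθε, hθE, hπE,
    fun x _ => hππ x, fun x _ => hπθ x, hsurj,
    fun h x _ => hglob12 (glMact k H C h x), fun h x _ => hglob13 h x, h14, h15⟩


end Globalization18
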